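/- For every even positive integer n and every integer i with 0 ≤ i ≤ n, the number K(i,n) = Σ_{j=0}^{i} (-1)^j · C(i,j) · C(n-i, n/2 - j) satisfies: K(i,n) = 0 if i is odd; K(i,n) < 0 if i ≡ 2 (mod 4); and K(i,n) > 0 if i ≡ 0 (mod 4). -/

import Mathlib

/-!
Writing `Kₖ(x)` for the coefficient of `z^k` in `(1 - z)^x (1 + z)^(n - x)`, the reciprocity
`C(n, x) Kₖ(x) = C(n, k) Kₓ(k)` holds term by term, since both sides of the `j`-th term are the
multinomial coefficient `n! / (j! (x - j)! (k - j)! (n - x - k + j)!)` up to the sign `(-1)^j`.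
For `n = 2m` and `k = m` it turns `K(i, n)` into a positive multiple of the coefficient of `z^i` in
`(1 - z)^m (1 + z)^m = (1 - z²)^m`, which is `0` for odd `i` and `(-1)^(i/2) C(m, i/2)` for even `i`.
-/

/-- Krawtchouk value K(i,n) = Σ_{j=0}^{i} (-1)^j C(i,j) C(n-i, n/2-j),
with the convention that C(a,b) = 0 when b < 0. -/
def K (i n : ℕ) : ℤ :=
  ∑ j ∈ Finset.range (i + 1),
    if j ≤ n / 2 then (-1 : ℤ) ^ j * (i.choose j) * ((n - i).choose (n / 2 - j)) else 0

open Polynomial Finset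

theorem Nat.choose_mul_choose_sub_comm (N a b : ℕ) :
    N.choose a * (N - a).choose b = N.choose b * (N - b).choose a := by
  have ha := Nat.choose_mul (n := N) (Nat.le_add_right a b)
  have hb := Nat.choose_mul (n := N) (Nat.le_add_left b a)
  rw [Nat.add_sub_cancel_left, Nat.choose_symm_add] at ha
  rw [Nat.add_sub_cancel] at hb
  rw [← ha, ← hb]

theorem Nat.choose_mul_choose_mul_choose_sub_comm {n x k j : ℕ} (hx : j ≤ x) (hk : j ≤ k) :
    n.choose x * (x.choose j * (n - x).choose (k - j)) =
      n.choose k * (k.choose j * (n - k).choose (x - j)) := by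
  have hnx : n - x = n - j - (x - j) := by omega
  have hnk : n - k = n - j - (k - j) := by omega
  rw [← mul_assoc, ← mul_assoc, Nat.choose_mul hx, Nat.choose_mul hk, mul_assoc, mul_assoc, hnx,
    hnk, Nat.choose_mul_choose_sub_comm]

theorem Finset.sum_range_succ_eq_sum_range_min_succ {M : Type*} [AddCommMonoid M] {f : ℕ → M}
    {x : ℕ} (hf : ∀ j, x < j → f j = 0) (k : ℕ) :
    ∑ j ∈ range (k + 1), f j = ∑ j ∈ range (min x k + 1), f j := by
  refine (sum_subset (range_subset_range.2 (by omega)) fun j hjk hjx => hf j ?_).symm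
  simp only [mem_range] at hjk hjx
  omega

theorem Polynomial.coeff_one_sub_X_pow {R : Type*} [CommRing R] (m j : ℕ) :
    ((1 - X : R[X]) ^ m).coeff j = (-1) ^ j * m.choose j := by
  rw [show (1 - X : R[X]) = C (-1) * (X + C (-1)) by simp; ring, mul_pow, ← C_pow, coeff_C_mul,
    coeff_X_add_C_pow, ← mul_assoc, ← pow_add]
  rcases le_or_gt j m with hj | hj
  · rw [show m + (m - j) = j + 2 * (m - j) by omega, pow_add, pow_mul, neg_one_sq, one_pow,
      mul_one]
  · simp [Nat.choose_eq_zero_of_lt hj]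

theorem Polynomial.coeff_one_sub_X_sq_pow {R : Type*} [CommRing R] (m i : ℕ) :
    ((1 - X ^ 2 : R[X]) ^ m).coeff i =
      if Even i then (-1 : R) ^ (i / 2) * m.choose (i / 2) else 0 := by
  have h : (1 - X ^ 2 : R[X]) ^ m = expand R 2 ((1 - X) ^ m) := by simp
  rw [h, coeff_expand two_pos, coeff_one_sub_X_pow]
  simp only [even_iff_two_dvd]

/-- `krawtchouk n k x` is `Kₖ(x)` for the binary alphabet and length `n`. -/
noncomputable def krawtchouk (n k x : ℕ) : ℤ := ((1 - X) ^ x * (1 + X) ^ (n - x) : ℤ[X]).coeff k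

theorem krawtchouk_eq_sum (n k x : ℕ) :
    krawtchouk n k x =
      ∑ j ∈ range (min x k + 1), (-1 : ℤ) ^ j * x.choose j * (n - x).choose (k - j) := by
  rw [krawtchouk, coeff_mul, Nat.sum_antidiagonal_eq_sum_range_succ_mk,
    sum_range_succ_eq_sum_range_min_succ (x := x) _ k]
  · simp only [coeff_one_sub_X_pow, coeff_one_add_X_pow]
  · intro j hj
    simp [coeff_one_sub_X_pow, Nat.choose_eq_zero_of_lt hj]

theorem choose_mul_krawtchouk_comm (n k x : ℕ) :
    n.choose x * krawtchouk n k x = n.choose k * krawtchouk n x k := by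
  rw [krawtchouk_eq_sum, krawtchouk_eq_sum, min_comm, mul_sum, mul_sum]
  refine sum_congr rfl fun j hj => ?_
  rw [mem_range] at hj
  have h := congrArg (Nat.cast : ℕ → ℤ)
    (Nat.choose_mul_choose_mul_choose_sub_comm (n := n) (by omega : j ≤ x) (by omega : j ≤ k))
  push_cast at h
  linear_combination (-1 : ℤ) ^ j * h

theorem krawtchouk_two_mul_self (m x : ℕ) :
    krawtchouk (2 * m) x m = ((1 - X ^ 2 : ℤ[X]) ^ m).coeff x := by
  rw [krawtchouk, two_mul, Nat.add_sub_cancel, ← mul_pow]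
  ring_nf

theorem K_eq_krawtchouk (i n : ℕ) : K i n = krawtchouk n (n / 2) i := by
  rw [K, krawtchouk_eq_sum, sum_range_succ_eq_sum_range_min_succ (x := n / 2) _ i, min_comm]
  · refine sum_congr rfl fun j hj => if_pos ?_
    rw [mem_range] at hj
    omega
  · intro j hj
    exact if_neg (by omega)

theorem choose_mul_K_two_mul (m i : ℕ) :
    (2 * m).choose i * K i (2 * m) =
      (2 * m).choose m * if Even i then (-1 : ℤ) ^ (i / 2) * m.choose (i / 2) else 0 := by
  rw [K_eq_krawtchouk, Nat.mul_div_cancel_left m two_pos, choose_mul_krawtchouk_comm,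
    krawtchouk_two_mul_self, coeff_one_sub_X_sq_pow]

theorem krawtchouk_sign (n i : ℕ) (hn : Even n) (hi : i ≤ n) :
    (Odd i → K i n = 0) ∧
    (i % 4 = 2 → K i n < 0) ∧
    (i % 4 = 0 → 0 < K i n) := by
  obtain ⟨m, rfl⟩ := hn
  rw [← two_mul] at hi ⊢
  have hK := choose_mul_K_two_mul m i
  have hci : (0 : ℤ) < (2 * m).choose i := by exact_mod_cast Nat.choose_pos hi
  have hcm : (0 : ℤ) < (2 * m).choose m := by exact_mod_cast Nat.choose_pos (by omega)
  have hcm' : (0 : ℤ) < m.choose (i / 2) := by exact_mod_cast Nat.choose_pos (by omega)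
  refine ⟨fun hodd => ?_, fun h2 => ?_, fun h0 => ?_⟩
  · rw [if_neg (Nat.not_even_iff_odd.2 hodd), mul_zero] at hK
    exact (mul_eq_zero.1 hK).resolve_left hci.ne'
  · have hodd : Odd (i / 2) := Nat.odd_iff.2 (by omega)
    rw [if_pos (Nat.even_iff.2 (by omega)), hodd.neg_one_pow, neg_one_mul] at hK
    exact neg_of_mul_neg_right (hK ▸ mul_neg_of_pos_of_neg hcm (neg_neg_of_pos hcm')) hci.le
  · have heven : Even (i / 2) := Nat.even_iff.2 (by omega)
    rw [if_pos (Nat.even_iff.2 (by omega)), heven.neg_one_pow, one_mul] at hK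
    exact pos_of_mul_pos_right (hK ▸ mul_pos hcm hcm') hci.le
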